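/- Every α_{1.5} topological group is Ramsey. -/

import Mathlib

/-!
Perturb the matrix `g` to `z n m = g n m * y (k n m)`, where `y → 1` is a row of `g` with infinite
range and the indices `k n m > m` are chosen so that the entries of `z` are pairwise distinct and
different from `1`. The rows of `z` are then disjoint sequences converging to `1`, and `α₁.₅` yields
a convergent set `T` containing almost all of infinitely many rows. Thinning these rows out so that
row `n` lies in `T` beyond the next chosen index gives `I`; along the pairs of `I` both `z` and
`y ∘ k` tend to `1`, hence so does `g = z * (y ∘ k)⁻¹`. If no row of `g` has infinite range, every
row is eventually in `(𝓝 1).ker` and no perturbation is needed.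
-/

open Filter Topology Set

/-- A countably infinite set converging to `x`: `x` is not in the set, and the set is
cofinitely contained in every neighborhood of `x`. -/
def ConvSeq {X : Type*} [TopologicalSpace X] (S : Set X) (x : X) : Prop :=
  S.Countable ∧ S.Infinite ∧ x ∉ S ∧ ∀ U ∈ nhds x, (S \ U).Finite

/-- A set converges to `x` in the weak sense: all but finitely many of its elements
are in every neighborhood of `x`. -/
def SetConv {X : Type*} [TopologicalSpace X] (S : Set X) (x : X) : Prop :=
  ∀ U ∈ nhds x, (S \ U).Finite

open Function

def ltPairs (I : Set ℕ) : Set (ℕ × ℕ) := {p | p.1 ∈ I ∧ p.2 ∈ I ∧ p.1 < p.2}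

def AlphaOnePointFiveAt {X : Type*} [TopologicalSpace X] (x : X) : Prop :=
  ∀ S : ℕ → Set X, Pairwise (Disjoint on S) → (∀ n, ConvSeq (S n) x) →
    ∃ T, T ⊆ ⋃ n, S n ∧ ConvSeq T x ∧ {n | (S n \ T).Finite}.Infinite

section Convergence

variable {X : Type*} [TopologicalSpace X] {x : X}

lemma setConv_iff_cofinite_inf_principal_le {S : Set X} :
    SetConv S x ↔ cofinite ⊓ 𝓟 S ≤ 𝓝 x := by
  refine forall₂_congr fun U _ => ?_
  rw [mem_inf_principal', mem_cofinite, compl_union, compl_compl, sdiff_eq, inter_comm]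

lemma setConv_image_of_tendsto {α : Type*} {f : α → X} {P : Set α}
    (h : Tendsto f (cofinite ⊓ 𝓟 P) (𝓝 x)) : SetConv (f '' P) x := by
  intro U hU
  have hP : (P \ f ⁻¹' U).Finite := by
    simpa [mem_inf_principal', compl_ofPred, sdiff_eq, inter_comm] using h hU
  refine (hP.image f).subset ?_
  rintro _ ⟨⟨p, hp, rfl⟩, hpU⟩
  exact ⟨p, ⟨hp, hpU⟩, rfl⟩

lemma convSeq_range_of_tendsto {f : ℕ → X} (hf : Tendsto f atTop (𝓝 x)) (hinj : Injective f)
    (hne : ∀ m, f m ≠ x) : ConvSeq (range f) x := by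
  refine ⟨countable_range f, infinite_range_of_injective hinj, fun ⟨m, hm⟩ => hne m hm,
    fun U hU => ?_⟩
  have hfin : {m | f m ∉ U}.Finite := by
    rw [← Nat.cofinite_eq_atTop] at hf
    exact hf hU
  refine (hfin.image f).subset ?_
  rintro _ ⟨⟨m, rfl⟩, hm⟩
  exact ⟨m, hm, rfl⟩

end Convergence

lemma Filter.Tendsto.eventually_mem_ker_of_finite_range {ι X : Type*} {l : Filter ι}
    {F : Filter X} {f : ι → X} (hf : Tendsto f l F) (hfin : (range f).Finite) :
    ∀ᶠ i in l, f i ∈ F.ker := by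
  have hne : ∀ a ∈ range f \ F.ker, ∀ᶠ i in l, f i ≠ a := by
    rintro a ⟨-, ha⟩
    obtain ⟨U, hU, haU⟩ : ∃ U ∈ F, a ∉ U := by simpa using ha
    exact (hf.eventually_mem hU).mono fun i hi h => haU (h ▸ hi)
  filter_upwards [(eventually_all_finite hfin.sdiff).2 hne] with i hi
  by_contra h
  exact hi (f i) ⟨mem_range_self i, h⟩ rfl

lemma exists_infinite_subset_forall_ltPairs {J : Set ℕ} (hJ : J.Infinite) {P : ℕ → ℕ → Prop}
    (hP : ∀ n ∈ J, ∀ᶠ m in atTop, P n m) :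
    ∃ I ⊆ J, I.Infinite ∧ ∀ p ∈ ltPairs I, P p.1 p.2 := by
  obtain ⟨f, hfJ, hf⟩ := exists_seq_of_forall_finset_exists (· ∈ J) (fun n m => n < m ∧ P n m)
    fun s hs => ((Nat.frequently_atTop_iff_infinite.2 hJ).and_eventually
      ((s.eventually_all).2 fun n hn => (eventually_gt_atTop n).and (hP n (hs n hn)))).exists
  have hmono : StrictMono f := fun m n h => (hf m n h).1
  refine ⟨range f, range_subset_iff.2 hfJ, infinite_range_of_injective hmono.injective, ?_⟩
  rintro ⟨_, _⟩ ⟨⟨i, rfl⟩, ⟨j, rfl⟩, hlt⟩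
  exact (hf i j (hmono.lt_iff_lt.1 hlt)).2

lemma tendsto_snd_cofinite_inf_principal_ltPairs (I : Set ℕ) :
    Tendsto Prod.snd (cofinite ⊓ 𝓟 (ltPairs I)) atTop := by
  refine tendsto_atTop.2 fun N => eventually_inf_principal.2 ?_
  filter_upwards [((finite_Iio N).prod (finite_Iio N)).eventually_cofinite_notMem] with p hp hpI
  by_contra! h
  exact hp ⟨hpI.2.2.trans h, h⟩

noncomputable def distinctRep {α : Type*} (A : ℕ → Set α) (hA : ∀ t, (A t).Infinite) (t : ℕ) :
    α :=
  ((hA t).sdiff (finite_range fun s : Fin t => distinctRep A hA s)).nonempty.some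
termination_by t

lemma exists_injective_forall_mem {ι α : Type*} [Denumerable ι] {A : ι → Set α}
    (hA : ∀ i, (A i).Infinite) : ∃ f : ι → α, Injective f ∧ ∀ i, f i ∈ A i := by
  let e := Denumerable.eqv ι
  have hA' : ∀ t, (A (e.symm t)).Infinite := fun t => hA _
  have spec : ∀ t,
      distinctRep _ hA' t ∈ A (e.symm t) \ range fun s : Fin t => distinctRep _ hA' s :=
    fun t => by rw [distinctRep]; exact Nonempty.some_mem _
  refine ⟨distinctRep _ hA' ∘ e, ?_, fun i => by simpa using (spec (e i)).1⟩
  exact (Injective.of_lt_imp_ne fun s t hst h => (spec t).2 ⟨⟨s, hst⟩, h⟩).comp e.injective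

lemma exists_injective_mul_ne_one {ι G : Type*} [Denumerable ι] [Group G] (g : ι → G) (b : ι → ℕ)
    {y : ℕ → G} (hy : (range y).Infinite) :
    ∃ k : ι → ℕ, (∀ i, b i < k i) ∧ Injective (fun i => g i * y (k i)) ∧
      ∀ i, g i * y (k i) ≠ 1 := by
  have htail : ∀ m, (y '' Ioi m).Infinite := fun m h => hy <| by
    rw [← image_univ, ← Iic_union_Ioi (a := m), image_union]
    exact ((finite_Iic m).image y).union h
  obtain ⟨z, hz, hzA⟩ := exists_injective_forall_mem fun i =>
    ((htail (b i)).image (mul_right_injective (g i)).injOn).sdiff (finite_singleton 1)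
  have hzk : ∀ i, ∃ k, b i < k ∧ g i * y k = z i := fun i => by
    obtain ⟨⟨_, ⟨k, hk, rfl⟩, hkz⟩, -⟩ := hzA i
    exact ⟨k, hk, hkz⟩
  choose k hk hkz using hzk
  refine ⟨k, hk, funext hkz ▸ hz, fun i => hkz i ▸ (hzA i).2⟩

lemma exists_infinite_tendsto_ltPairs_of_finite_range {X : Type*} [TopologicalSpace X]
    {g : ℕ → ℕ → X} {x : X} (hg : ∀ n, Tendsto (g n) atTop (𝓝 x))
    (hfin : ∀ n, (range (g n)).Finite) :
    ∃ I : Set ℕ, I.Infinite ∧ Tendsto (uncurry g) (cofinite ⊓ 𝓟 (ltPairs I)) (𝓝 x) := by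
  obtain ⟨I, -, hI, hgI⟩ := exists_infinite_subset_forall_ltPairs infinite_univ
    fun n _ => (hg n).eventually_mem_ker_of_finite_range (hfin n)
  exact ⟨I, hI, tendsto_inf_right fun U hU => mem_principal.2 fun p hp => mem_ker.1 (hgI p hp) U hU⟩

lemma exists_infinite_tendsto_ltPairs_of_alphaOnePointFiveAt {G : Type*} [Group G]
    [TopologicalSpace G] [IsTopologicalGroup G] (h15 : AlphaOnePointFiveAt (1 : G))
    {g : ℕ → ℕ → G} (hg : ∀ n, Tendsto (g n) atTop (𝓝 1)) {y : ℕ → G}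
    (hy : Tendsto y atTop (𝓝 1)) (hyr : (range y).Infinite) :
    ∃ I : Set ℕ, I.Infinite ∧ Tendsto (uncurry g) (cofinite ⊓ 𝓟 (ltPairs I)) (𝓝 1) := by
  obtain ⟨k, hk, hz, hz1⟩ := exists_injective_mul_ne_one (uncurry g) Prod.snd hyr
  set z : ℕ × ℕ → G := fun p => uncurry g p * y (k p)
  have hrow : ∀ n, Injective fun m => z (n, m) := fun n _ _ h => (Prod.ext_iff.1 (hz h)).2
  have hrow_tendsto : ∀ n, Tendsto (fun m => z (n, m)) atTop (𝓝 1) := fun n => by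
    simpa [z] using (hg n).mul (hy.comp (tendsto_atTop_mono (fun m => (hk (n, m)).le) tendsto_id))
  have hdisj : Pairwise (Disjoint on fun n => range fun m => z (n, m)) := by
    intro n n' hne
    refine disjoint_left.2 ?_
    rintro _ ⟨m, rfl⟩ ⟨m', h⟩
    exact hne (Prod.ext_iff.1 (hz h)).1.symm
  obtain ⟨T, -, hT, hJ⟩ := h15 _ hdisj fun n =>
    convSeq_range_of_tendsto (hrow_tendsto n) (hrow n) fun m => hz1 (n, m)
  obtain ⟨I, -, hI, hIT⟩ := exists_infinite_subset_forall_ltPairs hJ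
    (P := fun n m => z (n, m) ∈ T) fun n hn => by
      rw [← Nat.cofinite_eq_atTop, eventually_cofinite]
      exact (hn.preimage (hrow n).injOn).subset fun m hm => ⟨mem_range_self m, hm⟩
  have hzI : Tendsto z (cofinite ⊓ 𝓟 (ltPairs I)) (𝓝 1) :=
    (hz.tendsto_cofinite.inf (tendsto_principal_principal.2 hIT)).mono_right
      (setConv_iff_cofinite_inf_principal_le.1 hT.2.2.2)
  have hykI : Tendsto (fun p => y (k p)) (cofinite ⊓ 𝓟 (ltPairs I)) (𝓝 1) :=
    hy.comp (tendsto_atTop_mono (fun p => (hk p).le) (tendsto_snd_cofinite_inf_principal_ltPairs I))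
  exact ⟨I, hI, by simpa [z] using hzI.mul hykI.inv⟩

/-- Every α₁.₅ topological group is Ramsey. -/
theorem alpha_one_point_five_group_is_ramsey
    {G : Type*} [Group G] [TopologicalSpace G] [IsTopologicalGroup G]
    (h15 : ∀ (x : G) (S : ℕ → Set G), Pairwise (Function.onFun Disjoint S) →
      (∀ n, ConvSeq (S n) x) →
      ∃ T, T ⊆ ⋃ n, S n ∧ ConvSeq T x ∧ {n | (S n \ T).Finite}.Infinite) :
    ∀ g : ℕ → ℕ → G, (∀ n, Tendsto (g n) atTop (nhds (1 : G))) →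
      ∃ I : Set ℕ, I.Infinite ∧
        SetConv {z | ∃ n ∈ I, ∃ m ∈ I, n < m ∧ z = g n m} (1 : G) := by
  intro g hg
  obtain ⟨I, hI, hgI⟩ :
      ∃ I : Set ℕ, I.Infinite ∧ Tendsto (uncurry g) (cofinite ⊓ 𝓟 (ltPairs I)) (𝓝 1) := by
    by_cases hfin : ∀ n, (range (g n)).Finite
    · exact exists_infinite_tendsto_ltPairs_of_finite_range hg hfin
    · obtain ⟨r, hr⟩ := not_forall.1 hfin
      exact exists_infinite_tendsto_ltPairs_of_alphaOnePointFiveAt (h15 1) hg (hg r) hr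
  refine ⟨I, hI, ?_⟩
  convert setConv_image_of_tendsto hgI using 1
  ext z
  simp [ltPairs, eq_comm, and_assoc]
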